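/- If U is a bounded subset of the metric space (F_B(ℝ^m)^p, d_p), then for each α > 0 the family of α-cuts {[u]_α : u ∈ U} is uniformly bounded in ℝ^m, i.e., there exists M such that H([u]_α, {0}) ≤ M for all u ∈ U. -/

import Mathlib

open Metric Set MeasureTheory Filter

noncomputable section

/-- `Em m` is the Euclidean space ℝ^m. -/
abbrev Em (m : ℕ) := EuclideanSpace ℝ (Fin m)

/-- A set is star-shaped if it contains a point `x` such that the segment from `x`
to any point of the set lies in the set. -/
def StarShaped {m : ℕ} (K : Set (Em m)) : Prop :=
  ∃ x ∈ K, ∀ y ∈ K, segment ℝ x y ⊆ K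

/-- The kernel of a set: all points seeing the whole set. -/
def kern {m : ℕ} (K : Set (Em m)) : Set (Em m) :=
  {x | x ∈ K ∧ ∀ y ∈ K, segment ℝ x y ⊆ K}

/-- Kuratowski upper limit of a sequence of sets. -/
def KLimsup {m : ℕ} (C : ℕ → Set (Em m)) : Set (Em m) :=
  ⋂ n : ℕ, closure (⋃ k : ℕ, ⋃ _ : n ≤ k, C k)

/-- Kuratowski lower limit of a sequence of sets. -/
def KLiminf {m : ℕ} (C : ℕ → Set (Em m)) : Set (Em m) :=
  {x | ∃ f : ℕ → Em m, (∀ n, f n ∈ C n) ∧ Tendsto f atTop (nhds x)}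

/-- The α-cut of a fuzzy set `u`, for α > 0. -/
def acut {m : ℕ} (u : Em m → ℝ) (a : ℝ) : Set (Em m) := {x | a ≤ u x}

/-- The support (0-cut) of a fuzzy set. -/
def fsupp {m : ℕ} (u : Em m → ℝ) : Set (Em m) := closure {x | 0 < u x}

/-- Membership in `F_B(ℝ^m)^p`: normal, upper semi-continuous fuzzy sets with
compact α-cuts for α ∈ (0,1] and α ↦ H([u]_α, {0})^p integrable on (0,1]. -/
structure IsFuzzyBp {m : ℕ} (p : ℝ) (u : Em m → ℝ) : Prop where
  mem01 : ∀ x, u x ∈ Icc (0:ℝ) 1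
  normal : ∃ x, u x = 1
  usc : UpperSemicontinuous u
  compactCuts : ∀ a ∈ Ioc (0:ℝ) 1, IsCompact (acut u a)
  lp : IntegrableOn (fun a => hausdorffDist (acut u a) ({0} : Set (Em m)) ^ p)
        (Ioc (0:ℝ) 1)

/-- Membership in `F_B(ℝ^m)`: normal, upper semi-continuous fuzzy sets with
bounded (hence compact closed) support. -/
structure IsFuzzyB {m : ℕ} (u : Em m → ℝ) : Prop where
  mem01 : ∀ x, u x ∈ Icc (0:ℝ) 1
  normal : ∃ x, u x = 1
  usc : UpperSemicontinuous u
  bddSupp : Bornology.IsBounded {x | 0 < u x}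

/-- The `d_p` metric on fuzzy sets. -/
def dp {m : ℕ} (p : ℝ) (u v : Em m → ℝ) : ℝ :=
  (∫ a in Ioc (0:ℝ) 1, hausdorffDist (acut u a) (acut v a) ^ p) ^ (1/p)

/-- `d_p` distance to the crisp origin `0̂`. -/
def dpOrigin {m : ℕ} (p : ℝ) (u : Em m → ℝ) : ℝ :=
  (∫ a in Ioc (0:ℝ) 1, hausdorffDist (acut u a) ({0} : Set (Em m)) ^ p) ^ (1/p)

/-- Uniformly p-mean bounded family. -/
def UPMB {m : ℕ} (p : ℝ) (U : Set (Em m → ℝ)) : Prop :=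
  ∃ M : ℝ, ∀ u ∈ U, dpOrigin p u ≤ M

/-- p-mean equi-left-continuous family. -/
def PMELC {m : ℕ} (p : ℝ) (U : Set (Em m → ℝ)) : Prop :=
  ∀ ε > (0:ℝ), ∃ δ > (0:ℝ), ∀ h : ℝ, 0 ≤ h → h < δ → ∀ u ∈ U,
    (∫ a in Ioc h 1, hausdorffDist (acut u a) (acut u (a - h)) ^ p) ^ (1/p) < ε

/-- Truncation `u^{(a)}` of a fuzzy set at level `a`. -/
def ftrunc {m : ℕ} (u : Em m → ℝ) (a : ℝ) : Em m → ℝ :=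
  fun x => if a ≤ u x then u x else 0

/-- The kernel of a fuzzy set: intersection of the kernels of its cuts. -/
def fker {m : ℕ} (u : Em m → ℝ) : Set (Em m) :=
  ⋂ a ∈ Ioc (0:ℝ) 1, kern (acut u a)

/-- The full cut-family of a fuzzy set, with the 0-cut being the support. -/
def cutF {m : ℕ} (u : Em m → ℝ) (a : ℝ) : Set (Em m) :=
  if a = 0 then fsupp u else acut u a

/-- Conditions (i)–(iv) of the representation theorem for `F_B(ℝ^m)^p`. -/
def GoodFamily {m : ℕ} (p : ℝ) (v : ℝ → Set (Em m)) : Prop :=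
  (∀ l ∈ Ioc (0:ℝ) 1, (v l).Nonempty ∧ IsCompact (v l)) ∧
  (∀ l ∈ Ioc (0:ℝ) 1, v l = ⋂ g ∈ Ico (0:ℝ) l, v g) ∧
  (v 0 = closure (⋃ g ∈ Ioc (0:ℝ) 1, v g)) ∧
  IntegrableOn (fun a => hausdorffDist (v a) ({0} : Set (Em m)) ^ p) (Ioc (0:ℝ) 1)

/-!
The α-cut of a fuzzy set is sandwiched: for `0 < β ≤ α`, `[u]_α ⊆ [u]_β`, so `H([u]_α, {0}) ≤
H([u]_β, [v]_β) + H([v]_β, {0})` for a fixed `v ∈ U`. Raising to the power `p` and integrating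
over `β ∈ (0, α]` gives `α · H([u]_α, {0})^p ≤ 2^(p-1) (d_p(u, v)^p + d_p(v, 0̂)^p)`, which is
bounded uniformly in `u ∈ U`. Since the Bochner integral in `d_p` is junk unless its integrand is
integrable, the real work is the measurability of `β ↦ H([u]_β, [v]_β)`: it is left-continuous,
because `[u]_α` is the decreasing intersection of the compact sets `[u]_β`, `β < α`.
-/

open Topology

section LeftContinuous

/-- The largest point of `(n + 1)⁻¹ ℤ` strictly below `a`. -/
def leftGrid (n : ℕ) (a : ℝ) : ℝ := ((⌈a * (n + 1)⌉ : ℝ) - 1) / (n + 1)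

lemma leftGrid_lt (n : ℕ) (a : ℝ) : leftGrid n a < a := by
  rw [leftGrid, div_lt_iff₀ (by positivity)]
  linarith [Int.ceil_lt_add_one (a * (n + 1))]

lemma sub_le_leftGrid (n : ℕ) (a : ℝ) : a - 1 / (n + 1) ≤ leftGrid n a := by
  rw [leftGrid, le_div_iff₀ (by positivity), sub_mul, div_mul_cancel₀ _ (by positivity)]
  linarith [Int.le_ceil (a * (n + 1))]

lemma tendsto_leftGrid (a : ℝ) : Tendsto (fun n => leftGrid n a) atTop (𝓝[<] a) := by
  refine tendsto_nhdsWithin_of_tendsto_nhds_of_eventually_within _ ?_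
    (Eventually.of_forall fun n => leftGrid_lt n a)
  have hlow : Tendsto (fun n : ℕ => a - 1 / ((n : ℝ) + 1)) atTop (𝓝 a) := by
    simpa using tendsto_const_nhds.sub (tendsto_one_div_add_atTop_nhds_zero_nat (𝕜 := ℝ))
  exact tendsto_of_tendsto_of_tendsto_of_le_of_le hlow tendsto_const_nhds
    (sub_le_leftGrid · a) (fun n => (leftGrid_lt n a).le)

lemma measurable_comp_leftGrid {β : Type*} [MeasurableSpace β] (f : ℝ → β) (n : ℕ) :
    Measurable fun a => f (leftGrid n a) :=
  (measurable_from_top (f := fun k : ℤ => f (((k : ℝ) - 1) / (n + 1)))).comp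
    (Int.measurable_ceil.comp (measurable_id.mul_const _))

theorem measurable_of_tendsto_nhdsLT {β : Type*} [TopologicalSpace β]
    [TopologicalSpace.PseudoMetrizableSpace β] [MeasurableSpace β] [BorelSpace β] {f : ℝ → β}
    (hf : ∀ a, Tendsto f (𝓝[<] a) (𝓝 (f a))) : Measurable f :=
  measurable_of_tendsto_metrizable' atTop (measurable_comp_leftGrid f)
    (tendsto_pi_nhds.2 fun a => (hf a).comp (tendsto_leftGrid a))

end LeftContinuous

namespace Real

lemma rpow_add_le_mul_rpow_add_rpow {x y p : ℝ} (hx : 0 ≤ x) (hy : 0 ≤ y) (hp : 1 ≤ p) :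
    (x + y) ^ p ≤ 2 ^ (p - 1) * (x ^ p + y ^ p) := by
  lift x to NNReal using hx
  lift y to NNReal using hy
  exact_mod_cast NNReal.rpow_add_le_mul_rpow_add_rpow x y hp

end Real

namespace Metric

variable {α : Type*} [PseudoMetricSpace α]

lemma hausdorffDist_singleton_mono {s t : Set α} (hst : s ⊆ t) (ht : Bornology.IsBounded t)
    (x : α) : hausdorffDist s {x} ≤ hausdorffDist t {x} := by
  rcases s.eq_empty_or_nonempty with rfl | ⟨y, hy⟩
  · rw [hausdorffDist_empty']
    exact hausdorffDist_nonneg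
  have hfin : hausdorffEDist t {x} ≠ ⊤ :=
    hausdorffEDist_ne_top_of_nonempty_of_bounded ⟨y, hst hy⟩ (singleton_nonempty x) ht
      Bornology.isBounded_singleton
  refine hausdorffDist_le_of_infDist hausdorffDist_nonneg
    (fun z hz => infDist_le_hausdorffDist_of_mem (hst hz) hfin) ?_
  intro z hz
  rw [mem_singleton_iff.1 hz]
  calc infDist x s ≤ dist x y := infDist_le_dist_of_mem hy
    _ = infDist y {x} := by rw [infDist_singleton, dist_comm]
    _ ≤ hausdorffDist t {x} := infDist_le_hausdorffDist_of_mem (hst hy) hfin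

lemma hausdorffDist_le_of_subset_thickening {s t : Set α} {r : ℝ} (hr : 0 ≤ r) (hts : t ⊆ s)
    (hst : s ⊆ thickening r t) : hausdorffDist s t ≤ r :=
  hausdorffDist_le_of_mem_dist hr
    (fun x hx => by
      obtain ⟨y, hy, hxy⟩ := mem_thickening_iff.1 (hst hx)
      exact ⟨y, hy, hxy.le⟩)
    (fun x hx => ⟨x, hts hx, by rw [dist_self]; exact hr⟩)

lemma abs_hausdorffDist_sub_le {s t s' t' : Set α} (hss' : hausdorffEDist s s' ≠ ⊤)
    (hst : hausdorffEDist s t ≠ ⊤) (hs't' : hausdorffEDist s' t' ≠ ⊤) :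
    |hausdorffDist s t - hausdorffDist s' t'| ≤ hausdorffDist s s' + hausdorffDist t t' := by
  have h₁ := hausdorffDist_triangle (u := t) hss'
  have h₂ := hausdorffDist_triangle (u := t) hs't'
  have h₃ := hausdorffDist_triangle (u := t')
    (by rwa [hausdorffEDist_comm] : hausdorffEDist s' s ≠ ⊤)
  have h₄ := hausdorffDist_triangle (u := t') hst
  rw [hausdorffDist_comm (s := t') (t := t)] at h₂
  rw [hausdorffDist_comm (s := s') (t := s)] at h₃
  rw [abs_sub_le_iff]
  constructor <;> linarith

end Metric

section Distances

variable {m : ℕ} {p : ℝ}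

lemma setIntegral_hausdorffDist_rpow_nonneg (p : ℝ) (s t : ℝ → Set (Em m)) :
    0 ≤ ∫ a in Ioc (0:ℝ) 1, hausdorffDist (s a) (t a) ^ p :=
  setIntegral_nonneg measurableSet_Ioc fun _ _ => Real.rpow_nonneg hausdorffDist_nonneg p

lemma dp_nonneg (p : ℝ) (u v : Em m → ℝ) : 0 ≤ dp p u v :=
  Real.rpow_nonneg (setIntegral_hausdorffDist_rpow_nonneg p _ _) _

lemma dpOrigin_nonneg (p : ℝ) (u : Em m → ℝ) : 0 ≤ dpOrigin p u :=
  Real.rpow_nonneg (setIntegral_hausdorffDist_rpow_nonneg p _ _) _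

lemma dp_rpow (hp : p ≠ 0) (u v : Em m → ℝ) :
    dp p u v ^ p = ∫ a in Ioc (0:ℝ) 1, hausdorffDist (acut u a) (acut v a) ^ p := by
  rw [dp, one_div, Real.rpow_inv_rpow (setIntegral_hausdorffDist_rpow_nonneg p _ _) hp]

lemma dpOrigin_rpow (hp : p ≠ 0) (u : Em m → ℝ) :
    dpOrigin p u ^ p = ∫ a in Ioc (0:ℝ) 1, hausdorffDist (acut u a) ({0} : Set (Em m)) ^ p := by
  rw [dpOrigin, one_div, Real.rpow_inv_rpow (setIntegral_hausdorffDist_rpow_nonneg p _ _) hp]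

end Distances

section Cuts

variable {m : ℕ} {p q : ℝ} {u v : Em m → ℝ} {a : ℝ}

lemma acut_antitone (u : Em m → ℝ) : Antitone (acut u) :=
  fun _ _ hab _ hx => hab.trans hx

lemma iInter_acut_Ioo (u : Em m → ℝ) {c : ℝ} (hca : c < a) :
    ⋂ b : Ioo c a, acut u b = acut u a := by
  refine Subset.antisymm (fun x hx => ?_) (subset_iInter fun b => acut_antitone u b.2.2.le)
  by_contra hxa
  have hux : u x < a := not_le.1 hxa
  have hb : (max (u x) c + a) / 2 ∈ Ioo c a := by
    constructor <;> linarith [le_max_right (u x) c, max_lt hux hca]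
  have := mem_iInter.1 hx ⟨_, hb⟩
  simp only [acut, mem_ofPred_eq] at this
  linarith [le_max_left (u x) c, max_lt hux hca]

namespace IsFuzzyBp

lemma acut_nonempty (hu : IsFuzzyBp p u) (ha : a ≤ 1) : (acut u a).Nonempty := by
  obtain ⟨x, hx⟩ := hu.normal
  exact ⟨x, by simp [acut, hx, ha]⟩

lemma acut_of_nonpos (hu : IsFuzzyBp p u) (ha : a ≤ 0) : acut u a = univ :=
  eq_univ_of_forall fun x => ha.trans (hu.mem01 x).1

lemma acut_of_one_lt (hu : IsFuzzyBp p u) (ha : 1 < a) : acut u a = ∅ :=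
  eq_empty_of_forall_notMem fun x hx => (hx.trans (hu.mem01 x).2).not_gt ha

lemma eventually_acut_eq (hu : IsFuzzyBp p u) (ha : a ∉ Ioc 0 1) :
    ∀ᶠ b in 𝓝[<] a, acut u b = acut u a := by
  rcases le_or_gt a 0 with ha0 | ha0
  · filter_upwards [self_mem_nhdsWithin] with b hb
    rw [hu.acut_of_nonpos ha0, hu.acut_of_nonpos ((le_of_lt hb).trans ha0)]
  · have ha1 : 1 < a := lt_of_not_ge fun ha1 => ha ⟨ha0, ha1⟩
    filter_upwards [Ioo_mem_nhdsLT ha1] with b hb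
    rw [hu.acut_of_one_lt ha1, hu.acut_of_one_lt hb.1]

lemma hausdorffEDist_acut_ne_top (hu : IsFuzzyBp p u) (ha : a ∈ Ioc 0 1) {t : Set (Em m)}
    (ht : t.Nonempty) (htb : Bornology.IsBounded t) : hausdorffEDist (acut u a) t ≠ ⊤ :=
  hausdorffEDist_ne_top_of_nonempty_of_bounded (hu.acut_nonempty ha.2) ht
    (hu.compactCuts a ha).isBounded htb

lemma hausdorffEDist_acut_acut_ne_top (hu : IsFuzzyBp p u) (hv : IsFuzzyBp q v)
    (ha : a ∈ Ioc 0 1) {b : ℝ} (hb : b ∈ Ioc 0 1) : hausdorffEDist (acut u a) (acut v b) ≠ ⊤ :=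
  hu.hausdorffEDist_acut_ne_top ha (hv.acut_nonempty hb.2) (hv.compactCuts b hb).isBounded

lemma exists_acut_subset_thickening (hu : IsFuzzyBp p u) (ha : a ∈ Ioc 0 1) {ε : ℝ}
    (hε : 0 < ε) : ∃ b < a, acut u b ⊆ thickening ε (acut u a) := by
  have ha2 : a / 2 ∈ Ioc 0 1 := ⟨half_pos ha.1, (half_le_self ha.1.le).trans ha.2⟩
  have hc : a / 2 < a := half_lt_self ha.1
  have : Nonempty (Ioo (a / 2) a) := (nonempty_Ioo.2 hc).to_subtype
  have hcpt : IsCompact (acut u (a / 2) \ thickening ε (acut u a)) :=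
    (hu.compactCuts _ ha2).diff isOpen_thickening
  have hempty :
      (acut u (a / 2) \ thickening ε (acut u a)) ∩ ⋂ b : Ioo (a / 2) a, acut u b = ∅ := by
    rw [iInter_acut_Ioo u hc]
    exact eq_empty_of_forall_notMem fun x hx => hx.1.2 (self_subset_thickening hε _ hx.2)
  obtain ⟨⟨b, hb⟩, hbε⟩ := hcpt.elim_directed_family_closed (fun b : Ioo (a / 2) a => acut u b)
    (fun b => (hu.compactCuts b ⟨ha2.1.trans b.2.1, b.2.2.le.trans ha.2⟩).isClosed) hempty
    ((acut_antitone u).comp_monotone (Subtype.mono_coe _)).directed_ge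
  refine ⟨b, hb.2, fun x hx => ?_⟩
  by_contra hxε
  exact eq_empty_iff_forall_notMem.1 hbε x ⟨⟨acut_antitone u hb.1.le hx, hxε⟩, hx⟩

lemma tendsto_hausdorffDist_acut_nhdsLT (hu : IsFuzzyBp p u) (a : ℝ) :
    Tendsto (fun b => hausdorffDist (acut u b) (acut u a)) (𝓝[<] a) (𝓝 0) := by
  by_cases ha : a ∈ Ioc 0 1
  · refine Metric.tendsto_nhds.2 fun ε hε => ?_
    obtain ⟨b₀, hb₀, hsub⟩ := hu.exists_acut_subset_thickening ha (half_pos hε)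
    filter_upwards [Ioo_mem_nhdsLT hb₀] with b hb
    have hH : hausdorffDist (acut u b) (acut u a) ≤ ε / 2 :=
      hausdorffDist_le_of_subset_thickening (half_pos hε).le (acut_antitone u hb.2.le)
        ((acut_antitone u hb.1.le).trans hsub)
    rw [Real.dist_eq, sub_zero, abs_of_nonneg hausdorffDist_nonneg]
    linarith
  · refine tendsto_const_nhds.congr' ?_
    filter_upwards [hu.eventually_acut_eq ha] with b hb
    rw [hb, hausdorffDist_self_zero]

lemma tendsto_hausdorffDist_acut_acut_nhdsLT (hu : IsFuzzyBp p u) (hv : IsFuzzyBp q v) (a : ℝ) :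
    Tendsto (fun b => hausdorffDist (acut u b) (acut v b)) (𝓝[<] a)
      (𝓝 (hausdorffDist (acut u a) (acut v a))) := by
  by_cases ha : a ∈ Ioc 0 1
  · rw [tendsto_iff_dist_tendsto_zero]
    have hlim := (hu.tendsto_hausdorffDist_acut_nhdsLT a).add
      (hv.tendsto_hausdorffDist_acut_nhdsLT a)
    rw [add_zero] at hlim
    refine squeeze_zero' (Eventually.of_forall fun _ => dist_nonneg) ?_ hlim
    filter_upwards [Ioo_mem_nhdsLT ha.1] with b hb
    have hb' : b ∈ Ioc 0 1 := ⟨hb.1, hb.2.le.trans ha.2⟩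
    exact abs_hausdorffDist_sub_le (hu.hausdorffEDist_acut_acut_ne_top hu hb' ha)
      (hu.hausdorffEDist_acut_acut_ne_top hv hb' hb') (hu.hausdorffEDist_acut_acut_ne_top hv ha ha)
  · refine tendsto_const_nhds.congr' ?_
    filter_upwards [hu.eventually_acut_eq ha, hv.eventually_acut_eq ha] with b hbu hbv
    rw [hbu, hbv]

lemma measurable_hausdorffDist_acut (hu : IsFuzzyBp p u) (hv : IsFuzzyBp q v) :
    Measurable fun a => hausdorffDist (acut u a) (acut v a) :=
  measurable_of_tendsto_nhdsLT (hu.tendsto_hausdorffDist_acut_acut_nhdsLT hv)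

lemma integrableOn_hausdorffDist_acut_rpow (hp : 1 ≤ p) (hu : IsFuzzyBp p u)
    (hv : IsFuzzyBp p v) :
    IntegrableOn (fun a => hausdorffDist (acut u a) (acut v a) ^ p) (Ioc 0 1) := by
  refine ((hu.lp.add hv.lp).const_mul (2 ^ (p - 1))).mono'
    ((hu.measurable_hausdorffDist_acut hv).pow_const p).aestronglyMeasurable
    ((ae_restrict_iff' measurableSet_Ioc).2 (Eventually.of_forall fun a ha => ?_))
  have htri : hausdorffDist (acut u a) (acut v a) ≤
      hausdorffDist (acut u a) {0} + hausdorffDist (acut v a) {0} := by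
    have := hausdorffDist_triangle (u := acut v a)
      (hu.hausdorffEDist_acut_ne_top ha (singleton_nonempty 0) Bornology.isBounded_singleton)
    rwa [hausdorffDist_comm (s := {0})] at this
  rw [Real.norm_of_nonneg (Real.rpow_nonneg hausdorffDist_nonneg p)]
  exact (Real.rpow_le_rpow hausdorffDist_nonneg htri (by linarith)).trans
    (Real.rpow_add_le_mul_rpow_add_rpow hausdorffDist_nonneg hausdorffDist_nonneg hp)

lemma mul_rpow_hausdorffDist_acut_le (hp : 1 ≤ p) (hu : IsFuzzyBp p u) (hv : IsFuzzyBp p v)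
    (ha : a ∈ Ioc 0 1) :
    a * hausdorffDist (acut u a) ({0} : Set (Em m)) ^ p ≤
      2 ^ (p - 1) * (dp p u v ^ p + dpOrigin p v ^ p) := by
  set D := hausdorffDist (acut u a) ({0} : Set (Em m))
  set F : ℝ → ℝ := fun b => 2 ^ (p - 1) *
    (hausdorffDist (acut u b) (acut v b) ^ p + hausdorffDist (acut v b) ({0} : Set (Em m)) ^ p)
  have hF : IntegrableOn F (Ioc 0 1) :=
    ((hu.integrableOn_hausdorffDist_acut_rpow hp hv).add hv.lp).const_mul _
  have hF0 : ∀ b, 0 ≤ F b := fun b => mul_nonneg (by positivity)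
    (add_nonneg (Real.rpow_nonneg hausdorffDist_nonneg p) (Real.rpow_nonneg hausdorffDist_nonneg p))
  have hsub : Ioc 0 a ⊆ Ioc 0 1 := Ioc_subset_Ioc_right ha.2
  have hle : ∀ b ∈ Ioc 0 a, D ^ p ≤ F b := fun b hb => by
    have hb' : b ∈ Ioc 0 1 := ⟨hb.1, hb.2.trans ha.2⟩
    have hD : D ≤ hausdorffDist (acut u b) (acut v b) + hausdorffDist (acut v b) {0} :=
      (hausdorffDist_singleton_mono (acut_antitone u hb.2) (hu.compactCuts b hb').isBounded
        0).trans (hausdorffDist_triangle (hu.hausdorffEDist_acut_acut_ne_top hv hb' hb'))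
    exact (Real.rpow_le_rpow hausdorffDist_nonneg hD (by linarith)).trans
      (Real.rpow_add_le_mul_rpow_add_rpow hausdorffDist_nonneg hausdorffDist_nonneg hp)
  calc a * D ^ p = ∫ _ in Ioc 0 a, D ^ p := by simp [ha.1.le]
    _ ≤ ∫ b in Ioc 0 a, F b :=
      setIntegral_mono_on (integrableOn_const measure_Ioc_lt_top.ne) (hF.mono_set hsub)
        measurableSet_Ioc hle
    _ ≤ ∫ b in Ioc 0 1, F b :=
      setIntegral_mono_set hF (Eventually.of_forall hF0) hsub.eventuallyLE
    _ = 2 ^ (p - 1) * (dp p u v ^ p + dpOrigin p v ^ p) := by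
      rw [integral_const_mul, integral_add (hu.integrableOn_hausdorffDist_acut_rpow hp hv) hv.lp,
        dp_rpow (by linarith), dpOrigin_rpow (by linarith)]

lemma hausdorffDist_acut_le (hp : 1 ≤ p) (hu : IsFuzzyBp p u) (hv : IsFuzzyBp p v) (ha : 0 < a)
    {M : ℝ} (hM : dp p u v ≤ M) :
    hausdorffDist (acut u a) ({0} : Set (Em m)) ≤
      (2 ^ (p - 1) * (M ^ p + dpOrigin p v ^ p) / a) ^ (1 / p) := by
  have hM0 : 0 ≤ M := (dp_nonneg p u v).trans hM
  have hC : 0 ≤ 2 ^ (p - 1) * (M ^ p + dpOrigin p v ^ p) / a := by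
    have := Real.rpow_nonneg hM0 p
    have := Real.rpow_nonneg (dpOrigin_nonneg p v) p
    positivity
  rcases le_or_gt a 1 with ha1 | ha1
  · have hp0 : 0 < p := by linarith
    have hDp : hausdorffDist (acut u a) ({0} : Set (Em m)) ^ p ≤
        2 ^ (p - 1) * (M ^ p + dpOrigin p v ^ p) / a := by
      rw [le_div_iff₀ ha, mul_comm]
      refine (hu.mul_rpow_hausdorffDist_acut_le hp hv ⟨ha, ha1⟩).trans ?_
      gcongr
      exact dp_nonneg p u v
    calc hausdorffDist (acut u a) ({0} : Set (Em m))
        = (hausdorffDist (acut u a) ({0} : Set (Em m)) ^ p) ^ (1 / p) := by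
          rw [← Real.rpow_mul hausdorffDist_nonneg, mul_one_div_cancel hp0.ne', Real.rpow_one]
      _ ≤ _ := Real.rpow_le_rpow (Real.rpow_nonneg hausdorffDist_nonneg p) hDp (by positivity)
  · rw [hu.acut_of_one_lt ha1, hausdorffDist_empty']
    exact Real.rpow_nonneg hC _

end IsFuzzyBp

end Cuts

/-- A `d_p`-bounded subset of `F_B(ℝ^m)^p` has uniformly bounded
α-cuts for each α > 0. -/
theorem bounded_imp_cuts_uniformly_bounded {m : ℕ} (p : ℝ) (hp : 1 ≤ p)
    (U : Set (Em m → ℝ)) (hU : ∀ u ∈ U, IsFuzzyBp p u)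
    (hb : ∃ M : ℝ, ∀ u ∈ U, ∀ v ∈ U, dp p u v ≤ M) :
    ∀ a : ℝ, 0 < a →
      ∃ M : ℝ, ∀ u ∈ U, hausdorffDist (acut u a) ({0} : Set (Em m)) ≤ M := by
  obtain ⟨M, hM⟩ := hb
  intro a ha
  rcases U.eq_empty_or_nonempty with rfl | ⟨v, hv⟩
  · exact ⟨0, by simp⟩
  exact ⟨_, fun u hu => (hU u hu).hausdorffDist_acut_le hp (hU v hv) ha (hM u hu v hv)⟩

end
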